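/- Let σ ∈ (0,1) and let L be a horizontal line segment at height h > 0 whose endpoints have polar coordinates (r₁, θ₁) and (r₂, θ₂) with 0 < θ₁ < θ₂ < π (so r_i sin θ_i = h). Then ∫_{θ₁}^{θ₂} ∫_{h/sin θ}^∞ r^{−σ−1} dr dθ = (h^{−σ}/σ)·(Ψ_σ(cos θ₁) − Ψ_σ(cos θ₂)), where Ψ_σ(z) = (1/2)·sgn(z)·β_{z²}(1/2,(1+σ)/2). -/

import Mathlib

open Real MeasureTheory intervalIntegral

noncomputable def incBeta (x a b : ℝ) : ℝ :=
  ∫ u in (0:ℝ)..x, u ^ (a - 1) * (1 - u) ^ (b - 1)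

noncomputable def Psi (σ z : ℝ) : ℝ :=
  (1 / 2) * Real.sign z * incBeta (z ^ 2) (1 / 2) ((1 + σ) / 2)

/-!
The inner integral equals `h ^ (-σ) / σ * sin θ ^ σ`, so everything reduces to
`Psi σ (cos θ) = ∫ t in θ..π/2, sin t ^ σ`. For `θ ≤ π/2` this is the fundamental theorem of
calculus: substituting `u = cos² t` in the incomplete beta integral gives
`d/dt incBeta (cos² t) (1/2) ((1+σ)/2) = -2 sin t ^ σ`. For `θ > π/2` it follows by the
reflection `t ↦ π - t`, since `Psi σ` is odd.
-/

lemma integral_Ioi_div_rpow_neg_sub_one {σ h s : ℝ} (hσ : 0 < σ) (hh : 0 < h) (hs : 0 < s) :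
    ∫ r in Set.Ioi (h / s), r ^ (-σ - 1) = h ^ (-σ) / σ * s ^ σ := by
  rw [integral_Ioi_rpow_of_lt (by linarith) (div_pos hh hs), sub_add_cancel,
    div_rpow hh.le hs.le, rpow_neg hs.le]
  field_simp

section incBeta

variable {a b x : ℝ}

lemma intervalIntegrable_incBeta_integrand (ha : 0 < a) (hx0 : 0 ≤ x) (hx1 : x < 1) :
    IntervalIntegrable (fun u => u ^ (a - 1) * (1 - u) ^ (b - 1)) volume 0 x := by
  refine (intervalIntegral.intervalIntegrable_rpow' (r := a - 1) (by linarith)).mul_continuousOn ?_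
  rw [Set.uIcc_of_le hx0]
  exact (continuousOn_const.sub continuousOn_id).rpow_const fun u hu =>
    Or.inl (sub_ne_zero.2 (hu.2.trans_lt hx1).ne')

lemma continuousOn_incBeta (ha : 0 < a) (hx1 : x < 1) :
    ContinuousOn (fun y => incBeta y a b) (Set.Icc 0 x) := by
  rcases lt_or_ge x 0 with hx0 | hx0
  · simp [Set.Icc_eq_empty_of_lt hx0]
  have h := continuousOn_primitive_interval'
    (intervalIntegrable_incBeta_integrand (b := b) ha hx0 hx1) Set.left_mem_uIcc
  rwa [Set.uIcc_of_le hx0] at h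

lemma hasDerivAt_incBeta (ha : 0 < a) (hx0 : 0 < x) (hx1 : x < 1) :
    HasDerivAt (fun y => incBeta y a b) (x ^ (a - 1) * (1 - x) ^ (b - 1)) x := by
  have hcont : ∀ y ∈ Set.Ioo (0:ℝ) 1,
      ContinuousAt (fun u => u ^ (a - 1) * (1 - u) ^ (b - 1)) y := fun y hy =>
    (continuousAt_id.rpow_const (Or.inl hy.1.ne')).mul
      ((continuousAt_const.sub continuousAt_id).rpow_const (Or.inl (sub_ne_zero.2 hy.2.ne')))
  exact integral_hasDerivAt_right (intervalIntegrable_incBeta_integrand ha hx0.le hx1)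
    (ContinuousAt.stronglyMeasurableAtFilter isOpen_Ioo hcont x ⟨hx0, hx1⟩)
    (hcont x ⟨hx0, hx1⟩)

end incBeta

lemma hasDerivAt_incBeta_cos_sq (σ : ℝ) {t : ℝ} (ht0 : 0 < t) (ht : t < π / 2) :
    HasDerivAt (fun s => incBeta (cos s ^ 2) (1 / 2) ((1 + σ) / 2)) (-2 * sin t ^ σ) t := by
  have hc : 0 < cos t := cos_pos_of_mem_Ioo ⟨by linarith, ht⟩
  have hs : 0 < sin t := sin_pos_of_pos_of_lt_pi ht0 (by linarith)
  have hc2 : cos t ^ 2 < 1 := by nlinarith [sin_sq_add_cos_sq t]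
  refine ((hasDerivAt_incBeta one_half_pos (pow_pos hc 2) hc2).comp t
    ((hasDerivAt_cos t).pow 2)).congr_deriv ?_
  have hcos : (cos t ^ 2) ^ ((1:ℝ) / 2 - 1) = (cos t)⁻¹ := by
    rw [← rpow_natCast, ← rpow_mul hc.le, ← rpow_neg_one]
    norm_num
  have hsin : (1 - cos t ^ 2) ^ ((1 + σ) / 2 - 1) * sin t = sin t ^ σ := by
    rw [← sin_sq, ← rpow_natCast, ← rpow_mul hs.le, ← rpow_add_one hs.ne']
    congr 1
    push_cast
    ring
  rw [hcos, ← hsin]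
  field_simp
  ring

lemma Psi_neg (σ z : ℝ) : Psi σ (-z) = -Psi σ z := by
  simp only [Psi, neg_sq, Real.sign_neg]
  ring

lemma intervalIntegrable_sin_rpow (σ : ℝ) {a b : ℝ} (ha : a ∈ Set.Ioo 0 π)
    (hb : b ∈ Set.Ioo 0 π) : IntervalIntegrable (fun t => sin t ^ σ) volume a b := by
  refine ContinuousOn.intervalIntegrable (continuous_sin.continuousOn.rpow_const fun t ht => ?_)
  have ht' := Set.ordConnected_Ioo.uIcc_subset ha hb ht
  exact Or.inl (sin_pos_of_pos_of_lt_pi ht'.1 ht'.2).ne'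

lemma Psi_cos_eq_integral_of_le (σ : ℝ) {θ : ℝ} (h0 : 0 < θ) (hθ : θ ≤ π / 2) :
    Psi σ (cos θ) = ∫ t in θ..π / 2, sin t ^ σ := by
  rcases hθ.eq_or_lt with rfl | hθ
  · simp [Psi]
  have hmaps : Set.MapsTo (fun t => cos t ^ 2) (Set.Icc θ (π / 2)) (Set.Icc 0 (cos θ ^ 2)) :=
    fun t ht => ⟨sq_nonneg _, pow_le_pow_left₀ (cos_nonneg_of_mem_Icc ⟨by linarith [ht.1], ht.2⟩)
      (cos_le_cos_of_nonneg_of_le_pi h0.le (by linarith [ht.2]) ht.1) 2⟩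
  have hcos_sq : cos θ ^ 2 < 1 := by
    nlinarith [sin_sq_add_cos_sq θ, sin_pos_of_pos_of_lt_pi h0 (by linarith)]
  have hcont : ContinuousOn (fun t => incBeta (cos t ^ 2) (1 / 2) ((1 + σ) / 2))
      (Set.Icc θ (π / 2)) :=
    (continuousOn_incBeta (b := (1 + σ) / 2) one_half_pos hcos_sq).comp (by fun_prop) hmaps
  have hFTC := integral_eq_sub_of_hasDerivAt_of_le hθ.le hcont
    (fun t ht => hasDerivAt_incBeta_cos_sq σ (h0.trans ht.1) ht.2)
    ((intervalIntegrable_sin_rpow σ ⟨h0, by linarith⟩ ⟨by positivity, by linarith⟩).const_mul _)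
  rw [intervalIntegral.integral_const_mul] at hFTC
  simp only [cos_pi_div_two, ne_eq, two_ne_zero, not_false_eq_true, zero_pow, incBeta,
    integral_same, zero_sub] at hFTC
  rw [Psi, Real.sign_of_pos (cos_pos_of_mem_Ioo ⟨by linarith, hθ⟩), incBeta]
  linarith

lemma Psi_cos_eq_integral (σ : ℝ) {θ : ℝ} (h0 : 0 < θ) (hπ : θ < π) :
    Psi σ (cos θ) = ∫ t in θ..π / 2, sin t ^ σ := by
  rcases le_or_gt θ (π / 2) with hθ | hθ
  · exact Psi_cos_eq_integral_of_le σ h0 hθ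
  have hreflect := integral_comp_sub_left (fun t => sin t ^ σ) π (a := θ) (b := π / 2)
  simp only [sin_pi_sub, show π - π / 2 = π / 2 by ring] at hreflect
  rw [← neg_neg (cos θ), ← cos_pi_sub, Psi_neg,
    Psi_cos_eq_integral_of_le σ (by linarith) (by linarith), hreflect, integral_symm, neg_neg]

theorem stmt17 (σ : ℝ) (hσ : σ ∈ Set.Ioo (0:ℝ) 1) (h : ℝ) (hh : 0 < h)
    (θ₁ θ₂ : ℝ) (h1 : 0 < θ₁) (h12 : θ₁ < θ₂) (h2 : θ₂ < π) :
    (∫ θ in θ₁..θ₂, ∫ r in Set.Ioi (h / Real.sin θ), r ^ (-σ - 1)) =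
      (h ^ (-σ) / σ) * (Psi σ (Real.cos θ₁) - Psi σ (Real.cos θ₂)) := by
  have hθ₁ : θ₁ ∈ Set.Ioo 0 π := ⟨h1, h12.trans h2⟩
  have hθ₂ : θ₂ ∈ Set.Ioo 0 π := ⟨h1.trans h12, h2⟩
  have hpi2 : π / 2 ∈ Set.Ioo 0 π := ⟨by positivity, by linarith [pi_pos]⟩
  have hinner : Set.EqOn (fun θ => ∫ r in Set.Ioi (h / sin θ), r ^ (-σ - 1))
      (fun θ => h ^ (-σ) / σ * sin θ ^ σ) (Set.uIcc θ₁ θ₂) := fun θ hθ => by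
    have hθ' := Set.ordConnected_Ioo.uIcc_subset hθ₁ hθ₂ hθ
    exact integral_Ioi_div_rpow_neg_sub_one hσ.1 hh (sin_pos_of_pos_of_lt_pi hθ'.1 hθ'.2)
  rw [integral_congr hinner, intervalIntegral.integral_const_mul, Psi_cos_eq_integral σ h1 hθ₁.2,
    Psi_cos_eq_integral σ hθ₂.1 h2, ← integral_add_adjacent_intervals
      (intervalIntegrable_sin_rpow σ hθ₁ hθ₂) (intervalIntegrable_sin_rpow σ hθ₂ hpi2)]
  ring
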